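/- Let (S_n)_{n≥1} be a sequence of bounded linear test-statistics on a separable real Hilbert space H satisfying Conditions (G0) and (G1). If Condition (G2) holds for one orthonormal basis (φ_i)_{i≥1} of H, then it holds for every orthonormal basis of H: for any orthonormal basis (ψ_i)_{i≥1} and every ε > 0, lim_{i→∞} limsup_{n→∞} P(∑_{k>i} S_n(ψ_k)² ≥ ε) = 0. -/

import Mathlib

/-!
By the Riesz representation write `S n a = ⟪R n a, ·⟫`; then `∑_{k>i} S n a (b k)²` is
`‖T(b,i) (R n a)‖²`, where `T(b,i)` projects onto the closed span of `b (i+1), b (i+2), …`.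
Expanding `R n a` along the first `j + 1` vectors of `φ` gives
`‖T(ψ,i) (R n a)‖ ≤ ∑_{k ≤ j} |S n a (φ k)| ‖T(ψ,i) (φ k)‖ + ‖T(φ,j) (R n a)‖`.
The last term is small in probability for large `j` by (G2) for `φ`; each `S n · (φ k)` converges
in distribution by (G0), hence is tight by the portmanteau theorem; and the finitely many
`‖T(ψ,i) (φ k)‖` tend to `0` as `i → ∞`. Letting `i`, then the tightness level, then `j` go to
infinity gives (G2) for `ψ`.
-/

open MeasureTheory ProbabilityTheory Filter Topology
open scoped ENNReal InnerProductSpace BoundedContinuousFunction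

section Geometry

variable {H : Type*} [NormedAddCommGroup H] [InnerProductSpace ℝ H]

theorem Orthonormal.norm_sub_sum_inner_smul_sq {ι : Type*} {v : ι → H} (hv : Orthonormal ℝ v)
    (s : Finset ι) (x : H) :
    ‖x - ∑ i ∈ s, ⟪v i, x⟫_ℝ • v i‖ ^ 2 = ‖x‖ ^ 2 - ∑ i ∈ s, ⟪v i, x⟫_ℝ ^ 2 := by
  rw [norm_sub_sq_real, ← real_inner_self_eq_norm_sq (∑ i ∈ s, _), hv.inner_sum, inner_sum]
  simp only [real_inner_smul_right, real_inner_comm x, conj_trivial, sq]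
  ring

theorem HilbertBasis.hasSum_inner_sq {ι : Type*} (b : HilbertBasis ι ℝ H) (x : H) :
    HasSum (fun i => ⟪b i, x⟫_ℝ ^ 2) (‖x‖ ^ 2) := by
  simpa only [real_inner_comm x, ← sq, real_inner_self_eq_norm_sq] using
    b.hasSum_inner_mul_inner x x

namespace HilbertBasis

variable (b : HilbertBasis ℕ ℝ H)

/-- The orthogonal projection onto the closed span of `b (i + 1), b (i + 2), …`. -/
noncomputable def tailProj (i : ℕ) : H →L[ℝ] H :=
  ContinuousLinearMap.id ℝ H -
    ∑ k ∈ Finset.range (i + 1), (innerSL ℝ (b k)).smulRight (b k)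

theorem tailProj_apply (i : ℕ) (x : H) :
    b.tailProj i x = x - ∑ k ∈ Finset.range (i + 1), ⟪b k, x⟫_ℝ • b k := by
  simp [tailProj]

theorem norm_tailProj_sq (i : ℕ) (x : H) :
    ‖b.tailProj i x‖ ^ 2 = ‖x‖ ^ 2 - ∑ k ∈ Finset.range (i + 1), ⟪b k, x⟫_ℝ ^ 2 := by
  rw [tailProj_apply, b.orthonormal.norm_sub_sum_inner_smul_sq]

theorem norm_tailProj_sq_eq_tsum (i : ℕ) (x : H) :
    ‖b.tailProj i x‖ ^ 2 = ∑' k, ⟪b (i + 1 + k), x⟫_ℝ ^ 2 := by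
  rw [norm_tailProj_sq, ((hasSum_nat_add_iff' (i + 1)).2 (b.hasSum_inner_sq x)).tsum_eq.symm]
  simp only [add_comm]

theorem norm_tailProj_le (i : ℕ) (x : H) : ‖b.tailProj i x‖ ≤ ‖x‖ := by
  refine (pow_le_pow_iff_left₀ (norm_nonneg _) (norm_nonneg _) two_ne_zero).1 ?_
  rw [norm_tailProj_sq]
  exact sub_le_self _ (Finset.sum_nonneg fun k _ => sq_nonneg _)

theorem tendsto_norm_tailProj (x : H) :
    Tendsto (fun i => ‖b.tailProj i x‖) atTop (𝓝 0) := by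
  have hsq : Tendsto (fun i => ‖b.tailProj i x‖ ^ 2) atTop (𝓝 0) := by
    simp only [norm_tailProj_sq]
    rw [← sub_self (‖x‖ ^ 2)]
    exact tendsto_const_nhds.sub
      ((b.hasSum_inner_sq x).tendsto_sum_nat.comp (tendsto_add_atTop_nat 1))
  simpa [Real.sqrt_sq (norm_nonneg _)] using hsq.sqrt

theorem norm_tailProj_le_sum_add_norm_tailProj (ψ φ : HilbertBasis ℕ ℝ H) (i j : ℕ) (x : H) :
    ‖ψ.tailProj i x‖ ≤
      ∑ k ∈ Finset.range (j + 1), |⟪φ k, x⟫_ℝ| * ‖ψ.tailProj i (φ k)‖ + ‖φ.tailProj j x‖ := by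
  have hx : x = ∑ k ∈ Finset.range (j + 1), ⟪φ k, x⟫_ℝ • φ k + φ.tailProj j x := by
    rw [tailProj_apply, add_sub_cancel]
  calc ‖ψ.tailProj i x‖
      = ‖∑ k ∈ Finset.range (j + 1), ⟪φ k, x⟫_ℝ • ψ.tailProj i (φ k)
          + ψ.tailProj i (φ.tailProj j x)‖ := by
        conv_lhs => rw [hx]
        simp only [map_add, map_sum, map_smul]
    _ ≤ ∑ k ∈ Finset.range (j + 1), ‖⟪φ k, x⟫_ℝ • ψ.tailProj i (φ k)‖
          + ‖φ.tailProj j x‖ :=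
        (norm_add_le _ _).trans (add_le_add (norm_sum_le _ _) (ψ.norm_tailProj_le _ _))
    _ = _ := by simp only [norm_smul, Real.norm_eq_abs]

theorem setOf_le_norm_tailProj_subset (ψ φ : HilbertBasis ℕ ℝ H) {i j : ℕ} {M δ : ℝ}
    (h : M * ∑ k ∈ Finset.range (j + 1), ‖ψ.tailProj i (φ k)‖ < δ / 2) :
    {x | δ ≤ ‖ψ.tailProj i x‖} ⊆
      {x | δ / 2 ≤ ‖φ.tailProj j x‖} ∪ ⋃ k ∈ Finset.range (j + 1), {x | M ≤ |⟪φ k, x⟫_ℝ|} := by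
  rintro x (hx : δ ≤ ‖ψ.tailProj i x‖)
  by_contra! hout
  simp only [Set.mem_union, Set.mem_ofPred_eq, Set.mem_iUnion, not_or, not_exists, not_le] at hout
  obtain ⟨hφ, hcoord⟩ := hout
  have hhead : ∑ k ∈ Finset.range (j + 1), |⟪φ k, x⟫_ℝ| * ‖ψ.tailProj i (φ k)‖ < δ / 2 := by
    rw [Finset.mul_sum] at h
    refine lt_of_le_of_lt (Finset.sum_le_sum fun k hk => ?_) h
    exact mul_le_mul_of_nonneg_right (hcoord k hk).le (norm_nonneg _)
  linarith [norm_tailProj_le_sum_add_norm_tailProj ψ φ i j x]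

end HilbertBasis

end Geometry

namespace ENNReal

theorem limsup_add_le_add_limsup {α : Type*} {f : Filter α} (u v : α → ℝ≥0∞) :
    limsup (u + v) f ≤ limsup u f + limsup v f := by
  rcases f.eq_or_neBot with rfl | hf
  · simp
  rw [← tsub_le_iff_left]
  refine le_of_forall_gt_imp_ge_of_dense fun b hb => tsub_le_iff_left.2 ?_
  calc limsup (u + v) f ≤ limsup (fun a => u a + b) f :=
        limsup_le_limsup ((eventually_lt_of_limsup_lt hb).mono fun a ha => by
          simp only [Pi.add_apply]; gcongr)
    _ = limsup u f + b := limsup_add_const f u b (by isBoundedDefault) (by isBoundedDefault)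

theorem limsup_finset_sum_le {ι α : Type*} {f : Filter α} (s : Finset ι) (u : ι → α → ℝ≥0∞) :
    limsup (fun a => ∑ i ∈ s, u i a) f ≤ ∑ i ∈ s, limsup (u i) f := by
  simpa only [Finset.sum_fn] using
    Finset.le_sum_of_subadditive (fun w : α → ℝ≥0∞ => limsup w f)
      (limsup_le_of_le (by isBoundedDefault) (.of_forall fun _ => le_rfl))
      limsup_add_le_add_limsup s u

end ENNReal

section TailTransfer

variable {Ω H : Type*} [MeasurableSpace Ω] (μ : Measure Ω)
  [NormedAddCommGroup H] [InnerProductSpace ℝ H] (X : ℕ → Ω → H) (ψ φ : HilbertBasis ℕ ℝ H)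

theorem limsup_measure_tailProj_le {i j : ℕ} {M δ : ℝ}
    (h : M * ∑ k ∈ Finset.range (j + 1), ‖ψ.tailProj i (φ k)‖ < δ / 2) :
    limsup (fun n => μ {a | δ ≤ ‖ψ.tailProj i (X n a)‖}) atTop ≤
      limsup (fun n => μ {a | δ / 2 ≤ ‖φ.tailProj j (X n a)‖}) atTop +
        ∑ k ∈ Finset.range (j + 1), limsup (fun n => μ {a | M ≤ |⟪φ k, X n a⟫_ℝ|}) atTop := by
  calc _ ≤ limsup (fun n => μ {a | δ / 2 ≤ ‖φ.tailProj j (X n a)‖} +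
          ∑ k ∈ Finset.range (j + 1), μ {a | M ≤ |⟪φ k, X n a⟫_ℝ|}) atTop := by
        refine limsup_le_limsup (Eventually.of_forall fun n => ?_)
        calc _ ≤ μ (X n ⁻¹' ({x | δ / 2 ≤ ‖φ.tailProj j x‖} ∪
              ⋃ k ∈ Finset.range (j + 1), {x | M ≤ |⟪φ k, x⟫_ℝ|})) :=
              measure_mono (Set.preimage_mono (HilbertBasis.setOf_le_norm_tailProj_subset ψ φ h))
          _ ≤ _ := by
              rw [Set.preimage_union, Set.preimage_iUnion₂]
              grw [measure_union_le, measure_biUnion_finset_le]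
              rfl
    _ ≤ _ := by
        grw [← ENNReal.limsup_finset_sum_le]
        exact ENNReal.limsup_add_le_add_limsup _ _

theorem tendsto_limsup_measure_tailProj
    (htight : ∀ k, Tendsto (fun M : ℝ => limsup (fun n => μ {a | M ≤ |⟪φ k, X n a⟫_ℝ|}) atTop)
      atTop (𝓝 0))
    (hφ : ∀ δ > 0, Tendsto (fun j => limsup (fun n => μ {a | δ ≤ ‖φ.tailProj j (X n a)‖}) atTop)
      atTop (𝓝 0))
    {δ : ℝ} (hδ : 0 < δ) :
    Tendsto (fun i => limsup (fun n => μ {a | δ ≤ ‖ψ.tailProj i (X n a)‖}) atTop) atTop (𝓝 0) := by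
  set L := fun i => limsup (fun n => μ {a | δ ≤ ‖ψ.tailProj i (X n a)‖}) atTop
  have hJM : ∀ j (M : ℝ), limsup L atTop ≤
      limsup (fun n => μ {a | δ / 2 ≤ ‖φ.tailProj j (X n a)‖}) atTop +
        ∑ k ∈ Finset.range (j + 1), limsup (fun n => μ {a | M ≤ |⟪φ k, X n a⟫_ℝ|}) atTop := by
    intro j M
    have hhead : Tendsto (fun i => M * ∑ k ∈ Finset.range (j + 1), ‖ψ.tailProj i (φ k)‖)
        atTop (𝓝 0) := by
      simpa using (tendsto_finsetSum _ fun k _ => ψ.tendsto_norm_tailProj (φ k)).const_mul M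
    refine limsup_le_of_le (by isBoundedDefault) ?_
    filter_upwards [hhead.eventually_lt_const (half_pos hδ)] with i hi
    exact limsup_measure_tailProj_le μ X ψ φ hi
  have hJ : ∀ j, limsup L atTop ≤
      limsup (fun n => μ {a | δ / 2 ≤ ‖φ.tailProj j (X n a)‖}) atTop := fun j =>
    ge_of_tendsto (by simpa using tendsto_const_nhds.add (tendsto_finsetSum _ fun k _ => htight k))
      (Eventually.of_forall (hJM j))
  exact tendsto_of_le_liminf_of_limsup_le zero_le
    (ge_of_tendsto (hφ _ (half_pos hδ)) (Eventually.of_forall hJ))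

end TailTransfer

theorem limsup_measure_preimage_le_of_tendsto_integral {Ω E ι : Type*} [MeasurableSpace Ω]
    {P : Measure Ω} [IsProbabilityMeasure P] [MeasurableSpace E] [TopologicalSpace E]
    [OpensMeasurableSpace E] [HasOuterApproxClosed E] {l : Filter ι} {X : ι → Ω → E}
    (hX : ∀ n, AEMeasurable (X n) P) {γ : Measure E} [IsProbabilityMeasure γ]
    (h : ∀ f : E →ᵇ ℝ, Tendsto (fun n => ∫ a, f (X n a) ∂P) l (𝓝 (∫ x, f x ∂γ)))
    {F : Set E} (hF : IsClosed F) :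
    limsup (fun n => P (X n ⁻¹' F)) l ≤ γ F := by
  let μs : ι → ProbabilityMeasure E := fun n =>
    ⟨P.map (X n), Measure.isProbabilityMeasure_map (hX n)⟩
  have hμs : Tendsto μs l (𝓝 ⟨γ, ‹_›⟩) :=
    ProbabilityMeasure.tendsto_iff_forall_integral_tendsto.2 fun f => by
      simpa [μs, integral_map (hX _) f.continuous.aestronglyMeasurable] using h f
  simpa [μs, Measure.map_apply_of_aemeasurable (hX _) hF.measurableSet] using
    ProbabilityMeasure.limsup_measure_closed_le_of_tendsto hμs hF

theorem tendsto_limsup_measure_abs_ge_of_tendsto_integral {Ω : Type*} [MeasurableSpace Ω]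
    {P : Measure Ω} [IsProbabilityMeasure P] {X : ℕ → Ω → ℝ} (hX : ∀ n, AEMeasurable (X n) P)
    {γ : Measure ℝ} [IsProbabilityMeasure γ]
    (h : ∀ f : ℝ →ᵇ ℝ, Tendsto (fun n => ∫ a, f (X n a) ∂P) atTop (𝓝 (∫ x, f x ∂γ))) :
    Tendsto (fun M : ℝ => limsup (fun n => P {a | M ≤ |X n a|}) atTop) atTop (𝓝 0) := by
  have hclosed (M : ℝ) : IsClosed {t : ℝ | M ≤ |t|} := isClosed_le continuous_const continuous_abs
  have hempty : (⋂ M : ℝ, {t : ℝ | M ≤ |t|}) = ∅ :=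
    Set.eq_empty_of_forall_notMem fun t ht => by
      have hcontra : |t| + 1 ≤ |t| := Set.mem_iInter.1 ht (|t| + 1)
      linarith
  have hγ : Tendsto (fun M : ℝ => γ {t | M ≤ |t|}) atTop (𝓝 0) := by
    simpa [hempty, Function.comp_def] using tendsto_measure_iInter_atTop (μ := γ)
      (fun M => (hclosed M).measurableSet.nullMeasurableSet)
      (fun M M' hMM' t ht => hMM'.trans ht) ⟨0, measure_ne_top _ _⟩
  refine tendsto_of_tendsto_of_tendsto_of_le_of_le tendsto_const_nhds hγ (fun _ => zero_le) ?_
  intro M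
  exact limsup_measure_preimage_le_of_tendsto_integral (F := {t : ℝ | M ≤ |t|}) hX h (hclosed M)

theorem HilbertBasis.tsum_sq_apply_eq_norm_tailProj_sq {H : Type*} [NormedAddCommGroup H]
    [InnerProductSpace ℝ H] [CompleteSpace H] (b : HilbertBasis ℕ ℝ H) (i : ℕ)
    (L : StrongDual ℝ H) :
    ∑' k, L (b (i + 1 + k)) ^ 2 = ‖b.tailProj i ((InnerProductSpace.toDual ℝ H).symm L)‖ ^ 2 := by
  simp only [norm_tailProj_sq_eq_tsum, real_inner_comm ((InnerProductSpace.toDual ℝ H).symm L),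
    InnerProductSpace.toDual_symm_apply]

theorem HilbertBasis.setOf_sq_le_tsum_sq_apply_eq {Ω H : Type*} [NormedAddCommGroup H]
    [InnerProductSpace ℝ H] [CompleteSpace H] (b : HilbertBasis ℕ ℝ H) (i : ℕ)
    (L : Ω → StrongDual ℝ H) {δ : ℝ} (hδ : 0 ≤ δ) :
    {a | δ ^ 2 ≤ ∑' k, L a (b (i + 1 + k)) ^ 2} =
      {a | δ ≤ ‖b.tailProj i ((InnerProductSpace.toDual ℝ H).symm (L a))‖} := by
  ext a
  rw [Set.mem_ofPred_eq, Set.mem_ofPred_eq, b.tsum_sq_apply_eq_norm_tailProj_sq,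
    pow_le_pow_iff_left₀ hδ (norm_nonneg _) two_ne_zero]

theorem condG2_of_any_basis_general
    {Ω : Type*} [MeasurableSpace Ω] (P : Measure Ω) [IsProbabilityMeasure P]
    {H : Type*} [NormedAddCommGroup H] [InnerProductSpace ℝ H]
    [CompleteSpace H]
    [MeasurableSpace (H →L[ℝ] ℝ)] [BorelSpace (H →L[ℝ] ℝ)]
    (S : ℕ → Ω → (H →L[ℝ] ℝ)) (hSmeas : ∀ n, Measurable (S n))
    -- Condition (G0):
    (σ : H →L[ℝ] H →L[ℝ] ℝ)
    (hG0 : ∀ (m : ℕ) (ω : Fin m → H),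
      0 ≤ ∑ i, ∑ j, σ (ω i) (ω j) ∧
      ∀ f : BoundedContinuousFunction ℝ ℝ,
        Tendsto (fun n => ∫ a, f (S n a (∑ i, ω i)) ∂P) atTop
          (𝓝 (∫ t, f t ∂gaussianReal 0 (∑ i, ∑ j, σ (ω i) (ω j)).toNNReal)))
    -- Condition (G2) for one orthonormal basis `φ`:
    (φ : HilbertBasis ℕ ℝ H)
    (hG2 : ∀ ε > (0 : ℝ),
      Tendsto
        (fun i => Filter.limsup
          (fun n => P {a | ε ≤ ∑' k : ℕ, (S n a (φ (i + 1 + k))) ^ 2}) atTop)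
        atTop (𝓝 (0 : ℝ≥0∞))) :
    ∀ ψ : HilbertBasis ℕ ℝ H, ∀ ε > (0 : ℝ),
      Tendsto
        (fun i => Filter.limsup
          (fun n => P {a | ε ≤ ∑' k : ℕ, (S n a (ψ (i + 1 + k))) ^ 2}) atTop)
        atTop (𝓝 (0 : ℝ≥0∞)) := by
  intro ψ ε hε
  let R : ℕ → Ω → H := fun n a => (InnerProductSpace.toDual ℝ H).symm (S n a)
  have htight (k : ℕ) :
      Tendsto (fun M : ℝ => limsup (fun n => P {a | M ≤ |⟪φ k, R n a⟫_ℝ|}) atTop) atTop (𝓝 0) := by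
    simp only [R, real_inner_comm _ (φ k), InnerProductSpace.toDual_symm_apply]
    refine tendsto_limsup_measure_abs_ge_of_tendsto_integral
      (γ := gaussianReal 0 (σ (φ k) (φ k)).toNNReal)
      (fun n => ((ContinuousLinearMap.apply ℝ ℝ (φ k)).measurable.comp (hSmeas n)).aemeasurable)
      fun f => ?_
    simpa using (hG0 1 ![φ k]).2 f
  have hφ (δ : ℝ) (hδ : 0 < δ) :
      Tendsto (fun j => limsup (fun n => P {a | δ ≤ ‖φ.tailProj j (R n a)‖}) atTop)
        atTop (𝓝 0) := by
    have h := hG2 (δ ^ 2) (by positivity)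
    simp only [φ.setOf_sq_le_tsum_sq_apply_eq _ (S _) hδ.le] at h
    exact h
  have hψ := tendsto_limsup_measure_tailProj P R ψ φ htight hφ (Real.sqrt_pos.2 hε)
  rw [← Real.sq_sqrt hε.le]
  simp only [ψ.setOf_sq_le_tsum_sq_apply_eq _ (S _) (Real.sqrt_nonneg ε)]
  exact hψ

/-- Let `(S_n)` be a sequence of bounded linear test-statistics on a
separable real Hilbert space `H` satisfying Conditions (G0) (with a continuous symmetric
bilinear form `σ`, the limits being centered Gaussians) and (G1).  If Condition (G2) holds
for one orthonormal basis `(φ_i)` of `H`, then it holds for every orthonormal basis: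
for any orthonormal basis `(ψ_i)` and every `ε > 0`,
`lim_{i→∞} limsup_{n→∞} P(∑_{k>i} S_n(ψ_k)² ≥ ε) = 0`. -/
theorem condG2_of_any_basis
    {Ω : Type*} [MeasurableSpace Ω] (P : Measure Ω) [IsProbabilityMeasure P]
    {H : Type*} [NormedAddCommGroup H] [InnerProductSpace ℝ H]
    [CompleteSpace H] [TopologicalSpace.SeparableSpace H]
    [MeasurableSpace (H →L[ℝ] ℝ)] [BorelSpace (H →L[ℝ] ℝ)]
    (S : ℕ → Ω → (H →L[ℝ] ℝ)) (hSmeas : ∀ n, Measurable (S n))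
    -- Condition (G0):
    (σ : H →L[ℝ] H →L[ℝ] ℝ) (hσsymm : ∀ v w : H, σ v w = σ w v)
    (hG0 : ∀ (m : ℕ) (ω : Fin m → H),
      0 ≤ ∑ i, ∑ j, σ (ω i) (ω j) ∧
      ∀ f : BoundedContinuousFunction ℝ ℝ,
        Tendsto (fun n => ∫ a, f (S n a (∑ i, ω i)) ∂P) atTop
          (𝓝 (∫ t, f t ∂gaussianReal 0 (∑ i, ∑ j, σ (ω i) (ω j)).toNNReal)))
    -- Condition (G1):
    (hG1 : ∃ b : HilbertBasis ℕ ℝ H, Summable fun i => σ (b i) (b i))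
    -- Condition (G2) for one orthonormal basis `φ`:
    (φ : HilbertBasis ℕ ℝ H)
    (hG2 : ∀ ε > (0 : ℝ),
      Tendsto
        (fun i => Filter.limsup
          (fun n => P {a | ε ≤ ∑' k : ℕ, (S n a (φ (i + 1 + k))) ^ 2}) atTop)
        atTop (𝓝 (0 : ℝ≥0∞))) :
    ∀ ψ : HilbertBasis ℕ ℝ H, ∀ ε > (0 : ℝ),
      Tendsto
        (fun i => Filter.limsup
          (fun n => P {a | ε ≤ ∑' k : ℕ, (S n a (ψ (i + 1 + k))) ^ 2}) atTop)
        atTop (𝓝 (0 : ℝ≥0∞)) :=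
  condG2_of_any_basis_general P S hSmeas σ hG0 φ hG2
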